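/- arXiv:2602.18003 — 5 statements merged into one kernel-verified Lean document; each statement's English description precedes it below -/
import Mathlib

section
/- Let P be a finite stochastic matrix with Cesàro limit P_*. Then the matrix I - P + P_* is invertible. -/
/-!
If the Cesàro means `Aₕ = H⁻¹ • ∑_{i<H} Pⁱ` converge to `L`, then `H⁻¹ • Pᴴ → 0` (it is a difference
of consecutive means), so the telescoping identity `Aₕ (P - 1) = H⁻¹ • (Pᴴ - 1)` gives
`L P = P L = L`, and hence `L² = L`. If `(1 - P + L) x = 0`, multiplying by `L` gives `L x = 0`,
so `P x = x`; then every `Aₕ` fixes `x`, so `x = L x = 0`. In a finite-dimensional algebra such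
as the matrices, an element that is not a left zero divisor is a unit.
-/

open Matrix Filter Finset

/-- A row-stochastic matrix: nonnegative entries and rows summing to 1. -/
def IsStochastic {n : Type*} [Fintype n] (P : Matrix n n ℝ) : Prop :=
  (∀ i j, 0 ≤ P i j) ∧ ∀ i, ∑ j, P i j = 1

/-- `Pstar` is the Cesàro limit of the powers of `P`. -/
def CesaroLimit {n : Type*} [Fintype n] [DecidableEq n] (P Pstar : Matrix n n ℝ) : Prop :=
  Filter.Tendsto (fun H : ℕ => (H : ℝ)⁻¹ • ∑ i ∈ Finset.range H, P ^ i)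
    Filter.atTop (nhds Pstar)

open Topology

section CesaroMean

variable {R : Type*} [Ring R] [Algebra ℝ R]

noncomputable def cesaroMean (P : R) (H : ℕ) : R := (H : ℝ)⁻¹ • ∑ i ∈ range H, P ^ i

theorem cesaroMean_mul_sub_one (P : R) (H : ℕ) :
    cesaroMean P H * (P - 1) = (H : ℝ)⁻¹ • (P ^ H - 1) := by
  rw [cesaroMean, smul_mul_assoc, geom_sum_mul]

theorem sub_one_mul_cesaroMean (P : R) (H : ℕ) :
    (P - 1) * cesaroMean P H = (H : ℝ)⁻¹ • (P ^ H - 1) := by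
  rw [cesaroMean, mul_smul_comm, mul_geom_sum]

theorem cesaroMean_mul_of_mul_eq {P x : R} (h : P * x = x) {H : ℕ} (hH : H ≠ 0) :
    cesaroMean P H * x = x := by
  have hpow : ∀ i : ℕ, P ^ i * x = x := by
    intro i
    induction i with
    | zero => rw [pow_zero, one_mul]
    | succ i ih => rw [pow_succ', mul_assoc, ih, h]
  rw [cesaroMean, smul_mul_assoc, sum_mul]
  simp only [hpow, sum_const, card_range]
  rw [← Nat.cast_smul_eq_nsmul ℝ, smul_smul, inv_mul_cancel₀ (Nat.cast_ne_zero.mpr hH), one_smul]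

theorem inv_smul_pow_eq_cesaroMean (P : R) {H : ℕ} (hH : H ≠ 0) :
    (H : ℝ)⁻¹ • P ^ H = (1 + (H : ℝ)⁻¹) • cesaroMean P (H + 1) - cesaroMean P H := by
  have hH' : (H : ℝ) ≠ 0 := Nat.cast_ne_zero.mpr hH
  have hcoef : (1 + (H : ℝ)⁻¹) * ((H + 1 : ℕ) : ℝ)⁻¹ = (H : ℝ)⁻¹ := by
    push_cast
    field_simp
  rw [cesaroMean, cesaroMean, smul_smul, hcoef, sum_range_succ, smul_add, add_sub_cancel_left]

variable [TopologicalSpace R] [IsTopologicalRing R] {P L : R}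

theorem mul_eq_right_of_tendsto_cesaroMean_of_mul_eq [T2Space R]
    (hL : Tendsto (cesaroMean P) atTop (𝓝 L))
    {x : R} (h : P * x = x) : L * x = x := by
  refine tendsto_nhds_unique (hL.mul_const x) (tendsto_const_nhds.congr' ?_)
  filter_upwards [eventually_ne_atTop 0] with H hH
  exact (cesaroMean_mul_of_mul_eq h hH).symm

variable [ContinuousSMul ℝ R]

theorem tendsto_inv_smul_pow_of_tendsto_cesaroMean (hL : Tendsto (cesaroMean P) atTop (𝓝 L)) :
    Tendsto (fun H : ℕ => (H : ℝ)⁻¹ • P ^ H) atTop (𝓝 0) := by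
  have hcoef : Tendsto (fun H : ℕ => 1 + (H : ℝ)⁻¹) atTop (𝓝 1) := by
    simpa using tendsto_inv_atTop_nhds_zero_nat.const_add (1 : ℝ)
  have hlim := (hcoef.smul (hL.comp (tendsto_add_atTop_nat 1))).sub hL
  rw [one_smul, sub_self] at hlim
  refine hlim.congr' ?_
  filter_upwards [eventually_ne_atTop 0] with H hH
  exact (inv_smul_pow_eq_cesaroMean P hH).symm

theorem tendsto_inv_smul_pow_sub_one_of_tendsto_cesaroMean
    (hL : Tendsto (cesaroMean P) atTop (𝓝 L)) :
    Tendsto (fun H : ℕ => (H : ℝ)⁻¹ • (P ^ H - 1)) atTop (𝓝 0) := by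
  have hinv := (tendsto_inv_atTop_nhds_zero_nat (𝕜 := ℝ)).smul_const (1 : R)
  rw [zero_smul] at hinv
  simpa only [smul_sub, sub_zero] using (tendsto_inv_smul_pow_of_tendsto_cesaroMean hL).sub hinv

variable [T2Space R]

theorem mul_eq_left_of_tendsto_cesaroMean (hL : Tendsto (cesaroMean P) atTop (𝓝 L)) :
    L * P = L := by
  have hlim : Tendsto (fun H => cesaroMean P H * (P - 1)) atTop (𝓝 (L * (P - 1))) :=
    hL.mul_const _
  simp only [cesaroMean_mul_sub_one] at hlim
  have h := tendsto_nhds_unique hlim (tendsto_inv_smul_pow_sub_one_of_tendsto_cesaroMean hL)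
  rwa [mul_sub, mul_one, sub_eq_zero] at h

theorem mul_eq_right_of_tendsto_cesaroMean (hL : Tendsto (cesaroMean P) atTop (𝓝 L)) :
    P * L = L := by
  have hlim : Tendsto (fun H => (P - 1) * cesaroMean P H) atTop (𝓝 ((P - 1) * L)) :=
    hL.const_mul _
  simp only [sub_one_mul_cesaroMean] at hlim
  have h := tendsto_nhds_unique hlim (tendsto_inv_smul_pow_sub_one_of_tendsto_cesaroMean hL)
  rwa [sub_mul, one_mul, sub_eq_zero] at h

theorem isIdempotentElem_of_tendsto_cesaroMean (hL : Tendsto (cesaroMean P) atTop (𝓝 L)) :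
    IsIdempotentElem L :=
  mul_eq_right_of_tendsto_cesaroMean_of_mul_eq hL (mul_eq_right_of_tendsto_cesaroMean hL)

theorem eq_zero_of_one_sub_add_mul_eq_zero (hL : Tendsto (cesaroMean P) atTop (𝓝 L)) {x : R}
    (hx : (1 - P + L) * x = 0) : x = 0 := by
  have hLQ : L * (1 - P + L) = L := by
    rw [mul_add, mul_sub, mul_one, mul_eq_left_of_tendsto_cesaroMean hL,
      (isIdempotentElem_of_tendsto_cesaroMean hL).eq, sub_self, zero_add]
  have hLx : L * x = 0 := by rw [← hLQ, mul_assoc, hx, mul_zero]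
  have hPx : P * x = x := by
    rw [add_mul, sub_mul, one_mul, hLx, add_zero, sub_eq_zero] at hx
    exact hx.symm
  rw [← mul_eq_right_of_tendsto_cesaroMean_of_mul_eq hL hPx, hLx]

theorem isUnit_one_sub_add_of_tendsto_cesaroMean [IsArtinianRing Rᵐᵒᵖ]
    (hL : Tendsto (cesaroMean P) atTop (𝓝 L)) : IsUnit (1 - P + L) :=
  IsArtinianRing.isUnit_iff_isLeftRegular.mpr <| isLeftRegular_iff_mem_nonZeroDivisorsLeft.mpr <|
    (mem_nonZeroDivisorsLeft_iff R).mpr fun _ => eq_zero_of_one_sub_add_mul_eq_zero hL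

end CesaroMean

theorem cesaro_unit_general {n : Type*} [Fintype n] [DecidableEq n]
    (P Pstar : Matrix n n ℝ) (hC : CesaroLimit P Pstar) :
    IsUnit (1 - P + Pstar) :=
  isUnit_one_sub_add_of_tendsto_cesaroMean hC

theorem cesaro_unit {n : Type*} [Fintype n] [DecidableEq n]
    (P Pstar : Matrix n n ℝ) (hP : IsStochastic P) (hC : CesaroLimit P Pstar) :
    IsUnit (1 - P + Pstar) :=
  cesaro_unit_general P Pstar hC
end

section
/- Let P be a finite stochastic matrix with Cesàro limit P_*, and let V = (I - P + P_*)^{-1}(I - P_*) r for some vector r. Then P_* V = 0. -/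
open Matrix Filter Finset

/-! The Cesàro averages `Aₕ = H⁻¹ ∑_{i<H} Pⁱ` satisfy `Aₕ (P - 1) = H⁻¹ (Pᴴ - 1)`, and `H⁻¹ Pᴴ`
is a difference of consecutive rescaled averages, so it tends to `0`; in the limit
`P_* P = P_*`, hence `P_* Pᵏ = P_*` and `P_* P_* = P_*`. Thus `P_*` is a left fixed point of
`A = 1 - P + P_*`, so `P_* A⁻¹ = P_*` and `P_* V = P_* (1 - P_*) r = 0`. -/

theorem Matrix.mul_nonsing_inv_eq_of_mul_eq {n R : Type*} [Fintype n] [DecidableEq n]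
    [CommRing R] {M A : Matrix n n R} (h : M * A = M) (hA : IsUnit A.det) : M * A⁻¹ = M := by
  conv_lhs => rw [← h]
  rw [Matrix.mul_assoc, mul_nonsing_inv A hA, Matrix.mul_one]

namespace CesaroLimit

variable {n : Type*} [Fintype n] [DecidableEq n] {P Pstar : Matrix n n ℝ}

theorem tendsto_inv_smul_pow (hC : CesaroLimit P Pstar) :
    Tendsto (fun H : ℕ => (H : ℝ)⁻¹ • P ^ H) atTop (nhds 0) := by
  have hshift : Tendsto (fun H : ℕ => ((H + 1 : ℕ) : ℝ)⁻¹ • ∑ i ∈ range (H + 1), P ^ i)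
      atTop (nhds Pstar) := (tendsto_add_atTop_iff_nat 1).2 hC
  have hcoef : Tendsto (fun H : ℕ => 1 + (H : ℝ)⁻¹) atTop (nhds 1) := by
    simpa using tendsto_const_nhds.add (tendsto_inv_atTop_nhds_zero_nat (𝕜 := ℝ))
  have hlim := (hcoef.smul hshift).sub hC
  rw [one_smul, sub_self] at hlim
  refine hlim.congr' ?_
  filter_upwards [eventually_gt_atTop 0] with H hH
  have hH' : (H : ℝ) ≠ 0 := by exact_mod_cast hH.ne'
  rw [smul_smul, show (1 + (H : ℝ)⁻¹) * ((H + 1 : ℕ) : ℝ)⁻¹ = (H : ℝ)⁻¹ by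
      push_cast; field_simp,
    sum_range_succ, smul_add, add_sub_cancel_left]

theorem mul_eq (hC : CesaroLimit P Pstar) : Pstar * P = Pstar := by
  have hleft : Tendsto (fun H : ℕ => ((H : ℝ)⁻¹ • ∑ i ∈ range H, P ^ i) * (P - 1))
      atTop (nhds (Pstar * (P - 1))) :=
    ((continuous_id.matrix_mul continuous_const).tendsto Pstar).comp hC
  have hright : Tendsto (fun H : ℕ => (H : ℝ)⁻¹ • P ^ H - (H : ℝ)⁻¹ • (1 : Matrix n n ℝ))
      atTop (nhds 0) := by
    simpa using hC.tendsto_inv_smul_pow.sub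
      ((tendsto_inv_atTop_nhds_zero_nat (𝕜 := ℝ)).smul_const (1 : Matrix n n ℝ))
  have hzero : Pstar * (P - 1) = 0 := by
    refine tendsto_nhds_unique (hleft.congr fun H => ?_) hright
    rw [Matrix.smul_mul, geom_sum_mul, smul_sub]
  rwa [Matrix.mul_sub, Matrix.mul_one, sub_eq_zero] at hzero

theorem mul_pow_eq (hC : CesaroLimit P Pstar) (k : ℕ) : Pstar * P ^ k = Pstar := by
  induction k with
  | zero => rw [pow_zero, Matrix.mul_one]
  | succ k ih => rw [pow_succ, ← Matrix.mul_assoc, ih, hC.mul_eq]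

theorem isIdempotentElem (hC : CesaroLimit P Pstar) : IsIdempotentElem Pstar := by
  have hlim : Tendsto (fun H : ℕ => Pstar * ((H : ℝ)⁻¹ • ∑ i ∈ range H, P ^ i))
      atTop (nhds (Pstar * Pstar)) :=
    ((continuous_const.matrix_mul continuous_id).tendsto Pstar).comp hC
  refine tendsto_nhds_unique hlim (tendsto_const_nhds.congr' ?_)
  filter_upwards [eventually_gt_atTop 0] with H hH
  rw [Matrix.mul_smul, Matrix.mul_sum]
  simp_rw [hC.mul_pow_eq]
  rw [sum_const, card_range, ← Nat.cast_smul_eq_nsmul ℝ, smul_smul,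
    inv_mul_cancel₀ (by exact_mod_cast hH.ne'), one_smul]

theorem mul_one_sub_add_eq (hC : CesaroLimit P Pstar) : Pstar * (1 - P + Pstar) = Pstar := by
  rw [Matrix.mul_add, Matrix.mul_sub, Matrix.mul_one, hC.mul_eq, hC.isIdempotentElem.eq, sub_self,
    zero_add]

end CesaroLimit

theorem cesaro_bias_orthogonal_general {n : Type*} [Fintype n] [DecidableEq n]
    (P Pstar : Matrix n n ℝ) (hC : CesaroLimit P Pstar)
    (r V : n → ℝ)
    (hV : V = (1 - P + Pstar)⁻¹ *ᵥ ((1 - Pstar) *ᵥ r)) :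
    Pstar *ᵥ V = 0 := by
  rw [hV, mulVec_mulVec, mulVec_mulVec]
  by_cases hA : IsUnit (1 - P + Pstar).det
  · rw [mul_nonsing_inv_eq_of_mul_eq hC.mul_one_sub_add_eq hA, Matrix.mul_sub, Matrix.mul_one,
      hC.isIdempotentElem.eq, sub_self, zero_mulVec]
  · -- a singular matrix has junk inverse `0`
    rw [nonsing_inv_apply_not_isUnit _ hA, Matrix.mul_zero, Matrix.zero_mul, zero_mulVec]

theorem cesaro_bias_orthogonal {n : Type*} [Fintype n] [DecidableEq n]
    (P Pstar : Matrix n n ℝ) (hP : IsStochastic P) (hC : CesaroLimit P Pstar)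
    (r V : n → ℝ)
    (hV : V = (1 - P + Pstar)⁻¹ *ᵥ ((1 - Pstar) *ᵥ r)) :
    Pstar *ᵥ V = 0 :=
  cesaro_bias_orthogonal_general P Pstar hC r V hV
end

section
/- Value iteration normalized convergence: Let V^0 = 0 and V^{k+1} = P V^k + r for a finite stochastic matrix P and reward r, with gain J = P_* r and bias V. Then V^k = k J + V - P^k V for all k ≥ 1, and consequently ‖V^k/k - J‖_∞ ≤ 2‖V‖_∞/k. -/
open Matrix Filter Finset

private lemma sum_mulVec' {n : Type*} [Fintype n] {ι : Type*} (s : Finset ι)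
    (f : ι → Matrix n n ℝ) (x : n → ℝ) :
    (∑ i ∈ s, f i) *ᵥ x = ∑ i ∈ s, f i *ᵥ x := by
  induction s using Finset.cons_induction with
  | empty => simp [Matrix.zero_mulVec]
  | cons a s ha ih => simp [Finset.sum_cons, Matrix.add_mulVec, ih]

private lemma stoch_pow {n : Type*} [Fintype n] [DecidableEq n] {P : Matrix n n ℝ}
    (hP : IsStochastic P) (k : ℕ) : IsStochastic (P ^ k) := by
  induction k with
  | zero =>
    constructor
    · intro i j
      by_cases h : i = j <;> simp [pow_zero, Matrix.one_apply, h]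
    · intro i
      simp [pow_zero, Matrix.one_apply]
  | succ k ih =>
    rw [pow_succ]
    constructor
    · intro i j
      rw [Matrix.mul_apply]
      exact Finset.sum_nonneg fun l _ => mul_nonneg (ih.1 i l) (hP.1 l j)
    · intro i
      simp only [Matrix.mul_apply]
      rw [Finset.sum_comm]
      calc ∑ l, ∑ j, (P ^ k) i l * P l j
          = ∑ l, (P ^ k) i l * ∑ j, P l j := by simp [Finset.mul_sum]
        _ = ∑ l, (P ^ k) i l := by simp [hP.2]
        _ = 1 := ih.2 i

private lemma stoch_mulVec_norm_le {n : Type*} [Fintype n] {Q : Matrix n n ℝ}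
    (hQ : IsStochastic Q) (x : n → ℝ) : ‖Q *ᵥ x‖ ≤ ‖x‖ := by
  rw [pi_norm_le_iff_of_nonneg (norm_nonneg x)]
  intro i
  show ‖∑ j, Q i j * x j‖ ≤ ‖x‖
  calc ‖∑ j, Q i j * x j‖ ≤ ∑ j, ‖Q i j * x j‖ := norm_sum_le _ _
    _ = ∑ j, Q i j * ‖x j‖ := by
        refine Finset.sum_congr rfl fun j _ => ?_
        rw [norm_mul, Real.norm_of_nonneg (hQ.1 i j)]
    _ ≤ ∑ j, Q i j * ‖x‖ := by
        refine Finset.sum_le_sum fun j _ => ?_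
        exact mul_le_mul_of_nonneg_left (norm_le_pi_norm x j) (hQ.1 i j)
    _ = ‖x‖ := by rw [← Finset.sum_mul, hQ.2 i, one_mul]

theorem value_iteration_normalized {n : Type*} [Fintype n] [DecidableEq n]
    (P Pstar : Matrix n n ℝ) (hP : IsStochastic P) (hC : CesaroLimit P Pstar)
    (r J V : n → ℝ)
    (hJ : J = Pstar *ᵥ r)
    (hV : V = (1 - P + Pstar)⁻¹ *ᵥ ((1 - Pstar) *ᵥ r))
    (Vseq : ℕ → (n → ℝ)) (h0 : Vseq 0 = 0)
    (hrec : ∀ k : ℕ, Vseq (k + 1) = P *ᵥ Vseq k + r) :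
    ∀ k : ℕ, 1 ≤ k →
      Vseq k = (k : ℝ) • J + V - (P ^ k) *ᵥ V ∧
      ‖(k : ℝ)⁻¹ • Vseq k - J‖ ≤ 2 * ‖V‖ / k := by
  set S : ℕ → Matrix n n ℝ := fun H => (H : ℝ)⁻¹ • ∑ i ∈ Finset.range H, P ^ i with hS
  have hCS : Tendsto S atTop (nhds Pstar) := hC
  -- entrywise bound for powers
  have hent : ∀ (k : ℕ) (i j : n), (P ^ k) i j ≤ 1 := by
    intro k i j
    have h := (stoch_pow hP k).2 i
    have := Finset.single_le_sum (f := fun j => (P ^ k) i j)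
      (fun l _ => (stoch_pow hP k).1 i l) (Finset.mem_univ j)
    linarith
  -- correction term tends to 0
  have hcorr : Tendsto (fun H : ℕ => (H : ℝ)⁻¹ • (P ^ H - 1)) atTop
      (nhds (0 : Matrix n n ℝ)) := by
    refine tendsto_pi_nhds.mpr fun i => tendsto_pi_nhds.mpr fun j => ?_
    have hb : ∀ H : ℕ, ‖((H : ℝ)⁻¹ • (P ^ H - 1)) i j‖ ≤ 2 * (H : ℝ)⁻¹ := by
      intro H
      have h1 : ((H : ℝ)⁻¹ • (P ^ H - 1)) i j = (H : ℝ)⁻¹ * ((P ^ H) i j - (1 : Matrix n n ℝ) i j) := rfl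
      rw [h1, norm_mul, Real.norm_of_nonneg (by positivity), mul_comm]
      refine mul_le_mul_of_nonneg_right ?_ (by positivity)
      have h2 : (0:ℝ) ≤ (P ^ H) i j := (stoch_pow hP H).1 i j
      have h3 : (P ^ H) i j ≤ 1 := hent H i j
      have h4 : (0:ℝ) ≤ (1 : Matrix n n ℝ) i j := by
        by_cases h : i = j <;> simp [Matrix.one_apply, h]
      have h5 : (1 : Matrix n n ℝ) i j ≤ 1 := by
        by_cases h : i = j <;> simp [Matrix.one_apply, h]
      rw [Real.norm_eq_abs, abs_le]
      constructor <;> nlinarith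
    have hg : Tendsto (fun H : ℕ => 2 * (H : ℝ)⁻¹) atTop (nhds 0) := by
      have h1 : Tendsto (fun H : ℕ => (H : ℝ)⁻¹) atTop (nhds 0) :=
        tendsto_inv_atTop_nhds_zero_nat
      simpa using h1.const_mul (2:ℝ)
    have hres : Tendsto (fun H : ℕ => ((H : ℝ)⁻¹ • (P ^ H - 1)) i j) atTop (nhds (0:ℝ)) :=
      squeeze_zero_norm hb hg
    exact hres
  -- P * S H = S H + correction
  have hshift : ∀ H : ℕ, ∑ i ∈ Finset.range H, P ^ (i + 1)
      = ∑ i ∈ Finset.range H, P ^ i + (P ^ H - 1) := by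
    intro H
    have h1 := Finset.sum_range_succ' (fun i => P ^ i) H
    have h2 := Finset.sum_range_succ (fun i => P ^ i) H
    rw [h2, pow_zero] at h1
    -- h1 : ∑_{range H} P^i + P^H = ∑_{range H} P^(i+1) + 1
    have := h1.symm
    rw [← sub_eq_iff_eq_add] at this
    rw [← this]; abel
  have hPS : ∀ H : ℕ, P * S H = S H + (H : ℝ)⁻¹ • (P ^ H - 1) := by
    intro H
    simp only [hS, Matrix.mul_smul, Finset.mul_sum]
    have : ∀ i : ℕ, P * P ^ i = P ^ (i + 1) := fun i => (pow_succ' P i).symm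
    simp only [this, hshift H, smul_add]
  have hSP : ∀ H : ℕ, S H * P = S H + (H : ℝ)⁻¹ • (P ^ H - 1) := by
    intro H
    simp only [hS, Matrix.smul_mul, Finset.sum_mul]
    have : ∀ i : ℕ, P ^ i * P = P ^ (i + 1) := fun i => (pow_succ P i).symm
    simp only [this, hshift H, smul_add]
  have htendPS : Tendsto (fun H => S H + (H : ℝ)⁻¹ • (P ^ H - 1)) atTop (nhds Pstar) := by
    have := hCS.add hcorr
    simpa using this
  have hPP : P * Pstar = Pstar := by
    have t1 : Tendsto (fun H => P * S H) atTop (nhds (P * Pstar)) :=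
      ((continuous_const.matrix_mul continuous_id).tendsto Pstar).comp hCS
    exact tendsto_nhds_unique t1 (htendPS.congr fun H => (hPS H).symm)
  have hSPlim : Pstar * P = Pstar := by
    have t1 : Tendsto (fun H => S H * P) atTop (nhds (Pstar * P)) :=
      ((continuous_id.matrix_mul continuous_const).tendsto Pstar).comp hCS
    exact tendsto_nhds_unique t1 (htendPS.congr fun H => (hSP H).symm)
  have hPsPow : ∀ i : ℕ, Pstar * P ^ i = Pstar := by
    intro i
    induction i with
    | zero => simp
    | succ i ih => rw [pow_succ, ← Matrix.mul_assoc, ih, hSPlim]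
  have hPsS : ∀ H : ℕ, 1 ≤ H → Pstar * S H = Pstar := by
    intro H hH
    have hne : (H : ℝ) ≠ 0 := Nat.cast_ne_zero.mpr (by omega)
    simp only [hS, Matrix.mul_smul, Finset.mul_sum, hPsPow, Finset.sum_const,
      Finset.card_range]
    rw [← Nat.cast_smul_eq_nsmul ℝ, smul_smul, inv_mul_cancel₀ hne, one_smul]
  have hPsPs : Pstar * Pstar = Pstar := by
    have t1 : Tendsto (fun H => Pstar * S H) atTop (nhds (Pstar * Pstar)) :=
      ((continuous_const.matrix_mul continuous_id).tendsto Pstar).comp hCS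
    refine tendsto_nhds_unique t1 ?_
    refine Tendsto.congr' ?_ tendsto_const_nhds
    filter_upwards [eventually_ge_atTop 1] with H hH
    exact (hPsS H hH).symm
  set A : Matrix n n ℝ := 1 - P + Pstar with hA
  have hPsA : Pstar * A = Pstar := by
    rw [hA, Matrix.mul_add, Matrix.mul_sub, Matrix.mul_one, hSPlim, hPsPs]
    abel
  -- injectivity of A
  have hinj : Function.Injective A.mulVec := by
    intro x y hxy
    set z := x - y with hz
    have hz0 : A *ᵥ z = 0 := by rw [hz, Matrix.mulVec_sub, hxy, sub_self]
    have hPsz : Pstar *ᵥ z = 0 := by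
      have : Pstar *ᵥ (A *ᵥ z) = 0 := by rw [hz0, Matrix.mulVec_zero]
      rwa [Matrix.mulVec_mulVec, hPsA] at this
    have hPz : P *ᵥ z = z := by
      have : (1 : Matrix n n ℝ) *ᵥ z - P *ᵥ z + Pstar *ᵥ z = 0 := by
        rw [← Matrix.sub_mulVec, ← Matrix.add_mulVec, ← hA, hz0]
      rw [Matrix.one_mulVec, hPsz, add_zero, sub_eq_zero] at this
      exact this.symm
    have hPkz : ∀ i : ℕ, P ^ i *ᵥ z = z := by
      intro i
      induction i with
      | zero => simp
      | succ i ih => rw [pow_succ', ← Matrix.mulVec_mulVec, ih, hPz]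
    have hSz : ∀ H : ℕ, 1 ≤ H → S H *ᵥ z = z := by
      intro H hH
      have hne : (H : ℝ) ≠ 0 := Nat.cast_ne_zero.mpr (by omega)
      simp only [hS, Matrix.smul_mulVec, sum_mulVec', hPkz, Finset.sum_const,
        Finset.card_range]
      rw [← Nat.cast_smul_eq_nsmul ℝ, smul_smul, inv_mul_cancel₀ hne, one_smul]
    have t1 : Tendsto (fun H => S H *ᵥ z) atTop (nhds (Pstar *ᵥ z)) :=
      ((continuous_id.matrix_mulVec continuous_const).tendsto Pstar).comp hCS
    have t2 : Tendsto (fun H => S H *ᵥ z) atTop (nhds z) := by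
      refine Tendsto.congr' ?_ tendsto_const_nhds
      filter_upwards [eventually_ge_atTop 1] with H hH
      exact (hSz H hH).symm
    have hzz : Pstar *ᵥ z = z := tendsto_nhds_unique t1 t2
    have : z = 0 := by rw [← hzz, hPsz]
    exact sub_eq_zero.mp (by rw [← hz, this])
  have hU : IsUnit A := Matrix.mulVec_injective_iff_isUnit.mp hinj
  have hdet : IsUnit A.det := (Matrix.isUnit_iff_isUnit_det A).mp hU
  have hAAi : A * A⁻¹ = 1 := Matrix.mul_nonsing_inv A hdet
  have hPsAi : Pstar * A⁻¹ = Pstar := by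
    conv_lhs => rw [← hPsA]
    rw [Matrix.mul_assoc, hAAi, Matrix.mul_one]
  have hPsV : Pstar *ᵥ V = 0 := by
    rw [hV, Matrix.mulVec_mulVec, hPsAi, Matrix.mulVec_mulVec, Matrix.mul_sub,
      Matrix.mul_one, hPsPs, sub_self, Matrix.zero_mulVec]
  have hAV : A *ᵥ V = (1 - Pstar) *ᵥ r := by
    rw [hV, Matrix.mulVec_mulVec, hAAi, Matrix.one_mulVec]
  have key : r + P *ᵥ V = J + V := by
    have h1 : (1 : Matrix n n ℝ) *ᵥ V - P *ᵥ V + Pstar *ᵥ V = (1 : Matrix n n ℝ) *ᵥ r - Pstar *ᵥ r := by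
      rw [← Matrix.sub_mulVec, ← Matrix.add_mulVec, ← hA, hAV, Matrix.sub_mulVec]
    rw [Matrix.one_mulVec, Matrix.one_mulVec, hPsV, add_zero, ← hJ] at h1
    funext i
    have := congrFun h1 i
    simp only [Pi.sub_apply, Pi.add_apply] at this ⊢
    linarith
  have hPJ : P *ᵥ J = J := by rw [hJ, Matrix.mulVec_mulVec, hPP]
  -- the main formula by induction
  have hform : ∀ k : ℕ, Vseq (k + 1) = ((k : ℝ) + 1) • J + V - P ^ (k + 1) *ᵥ V := by
    intro k
    induction k with
    | zero =>
      rw [hrec 0, h0, Matrix.mulVec_zero, zero_add, pow_one]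
      funext i
      have := congrFun key i
      simp only [Pi.add_apply, Pi.sub_apply, Pi.smul_apply, smul_eq_mul] at this ⊢
      push_cast
      linarith
    | succ k ih =>
      rw [hrec (k + 1), ih, Matrix.mulVec_sub, Matrix.mulVec_add, Matrix.mulVec_smul, hPJ,
        Matrix.mulVec_mulVec, ← pow_succ']
      funext i
      have := congrFun key i
      simp only [Pi.add_apply, Pi.sub_apply, Pi.smul_apply, smul_eq_mul] at this ⊢
      push_cast
      ring_nf
      ring_nf at this
      linarith
  intro k hk
  obtain ⟨k, rfl⟩ : ∃ m, k = m + 1 := ⟨k - 1, (Nat.succ_pred_eq_of_pos hk).symm⟩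
  have hf : Vseq (k + 1) = ((k + 1 : ℕ) : ℝ) • J + V - P ^ (k + 1) *ᵥ V := by
    rw [hform k]; push_cast; ring_nf
  refine ⟨hf, ?_⟩
  have hne : ((k + 1 : ℕ) : ℝ) ≠ 0 := Nat.cast_ne_zero.mpr (by omega)
  have hpos : (0:ℝ) < ((k + 1 : ℕ) : ℝ) := by positivity
  have hdiff : ((k + 1 : ℕ) : ℝ)⁻¹ • Vseq (k + 1) - J
      = ((k + 1 : ℕ) : ℝ)⁻¹ • (V - P ^ (k + 1) *ᵥ V) := by
    rw [hf, smul_sub, smul_add, smul_smul, inv_mul_cancel₀ hne, one_smul, smul_sub]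
    abel
  rw [hdiff, norm_smul, Real.norm_eq_abs, abs_of_pos (by positivity)]
  have hb : ‖V - P ^ (k + 1) *ᵥ V‖ ≤ 2 * ‖V‖ := by
    calc ‖V - P ^ (k + 1) *ᵥ V‖ ≤ ‖V‖ + ‖P ^ (k + 1) *ᵥ V‖ := norm_sub_le _ _
      _ ≤ ‖V‖ + ‖V‖ := by
          have := stoch_mulVec_norm_le (stoch_pow hP (k + 1)) V
          linarith
      _ = 2 * ‖V‖ := by ring
  calc ((k + 1 : ℕ) : ℝ)⁻¹ * ‖V - P ^ (k + 1) *ᵥ V‖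
      ≤ ((k + 1 : ℕ) : ℝ)⁻¹ * (2 * ‖V‖) := by
        exact mul_le_mul_of_nonneg_left hb (by positivity)
    _ = 2 * ‖V‖ / ((k + 1 : ℕ) : ℝ) := by rw [div_eq_mul_inv]; ring
end

section
/- Three-point property of Bregman divergence: Let h be strictly convex and differentiable on the interior of its domain, D(p,q) = h(p) - h(q) - ⟨∇h(q), p - q⟩ the induced Bregman divergence, C a closed convex set, φ a convex function, and x⁺ = argmin_{u∈C} { φ(u) + D(u,x) } with x⁺ in the interior of dom h. Then for every u ∈ C, φ(x⁺) + D(x⁺, x) ≤ φ(u) + D(u, x) − D(u, x⁺). -/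
/-!
Perturb the minimizer `x⁺` towards `u` along the segment. Since `φ` lies below its chord there,
minimality of `x⁺` makes `t ↦ D(x⁺ + t(u - x⁺), x) + t(φ u - φ x⁺)` minimal at `t = 0` on `[0, 1]`,
so its right derivative `⟪∇h x⁺ - ∇h x, u - x⁺⟫ + φ u - φ x⁺` is nonnegative. The algebraic
three-point identity `D(u, x) = D(u, x⁺) + D(x⁺, x) + ⟪∇h x⁺ - ∇h x, u - x⁺⟫` turns this into the claim.
-/

open Set InnerProductSpace

theorem IsMinOn.le_add_fderiv_of_convexOn {E : Type*} [NormedAddCommGroup E] [NormedSpace ℝ E]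
    {C : Set E} {φ g : E → ℝ} {g' : E →L[ℝ] ℝ} {x₀ u : E}
    (hφ : ConvexOn ℝ C φ) (hg : HasFDerivAt g g' x₀) (hmin : IsMinOn (φ + g) C x₀)
    (hx₀ : x₀ ∈ C) (hu : u ∈ C) :
    φ x₀ ≤ φ u + g' (u - x₀) := by
  set G : ℝ → ℝ := fun t => g (x₀ + t • (u - x₀)) + t * (φ u - φ x₀)
  have hGmin : IsMinOn G (Icc 0 1) 0 := by
    intro t ⟨ht0, ht1⟩
    have hxt : x₀ + t • (u - x₀) = (1 - t) • x₀ + t • u := by module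
    have hchord : φ (x₀ + t • (u - x₀)) ≤ (1 - t) * φ x₀ + t * φ u := by
      rw [hxt]
      exact hφ.2 hx₀ hu (by linarith) ht0 (by ring)
    have hle : φ x₀ + g x₀ ≤ φ (x₀ + t • (u - x₀)) + g (x₀ + t • (u - x₀)) :=
      hmin (hxt ▸ hφ.1 hx₀ hu (by linarith) ht0 (by ring))
    show G 0 ≤ G t
    simp only [G, zero_smul, add_zero, zero_mul]
    nlinarith
  have hline : HasDerivAt (fun t : ℝ => x₀ + t • (u - x₀)) (u - x₀) 0 := by
    simpa using ((hasDerivAt_id (0 : ℝ)).smul_const (u - x₀)).const_add x₀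
  have hG : HasDerivAt G (g' (u - x₀) + (φ u - φ x₀)) 0 :=
    (hg.comp_hasDerivAt_of_eq (0 : ℝ) hline (by simp)).add
      (hasDerivAt_mul_const (φ u - φ x₀))
  have hcone : (1 : ℝ) ∈ posTangentConeAt (Icc (0 : ℝ) 1) 0 :=
    mem_posTangentConeAt_of_segment_subset (by simp [segment_eq_Icc])
  have hslope : 0 ≤ g' (u - x₀) + (φ u - φ x₀) := by
    simpa using hGmin.localize.hasFDerivWithinAt_nonneg hG.hasFDerivAt.hasFDerivWithinAt hcone
  linarith

section Bregman

variable {E : Type*} [NormedAddCommGroup E] [InnerProductSpace ℝ E] [CompleteSpace E]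

noncomputable def bregmanDiv (h : E → ℝ) (p q : E) : ℝ :=
  h p - h q - inner ℝ (gradient h q) (p - q)

theorem bregmanDiv_eq_add_add_inner (h : E → ℝ) (u x y : E) :
    bregmanDiv h u x =
      bregmanDiv h u y + bregmanDiv h y x + inner ℝ (gradient h y - gradient h x) (u - y) := by
  have hsplit : u - x = (u - y) + (y - x) := by abel
  simp only [bregmanDiv, hsplit, inner_add_right, inner_sub_left]
  ring

theorem hasGradientAt_bregmanDiv_left {h : E → ℝ} {p : E} (hp : DifferentiableAt ℝ h p) (q : E) :
    HasGradientAt (fun u => bregmanDiv h u q) (gradient h p - gradient h q) p := by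
  have hlin :
      HasFDerivAt (fun u => inner ℝ (gradient h q) (u - q)) (toDual ℝ E (gradient h q)) p := by
    simpa only [toDual_apply_apply, ← inner_sub_right] using
      (toDual ℝ E (gradient h q)).hasFDerivAt.sub_const (inner ℝ (gradient h q) q)
  rw [hasGradientAt_iff_hasFDerivAt, map_sub]
  exact (hp.hasGradientAt.hasFDerivAt.sub_const (h q)).sub hlin

end Bregman

theorem bregman_three_point_general {n : ℕ}
    (h : EuclideanSpace ℝ (Fin n) → ℝ)
    (hdiff : Differentiable ℝ h)
    (D : EuclideanSpace ℝ (Fin n) → EuclideanSpace ℝ (Fin n) → ℝ)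
    (hD : ∀ p q, D p q = h p - h q - (inner ℝ (gradient h q) (p - q) : ℝ))
    (C : Set (EuclideanSpace ℝ (Fin n))) (hC : Convex ℝ C)
    (φ : EuclideanSpace ℝ (Fin n) → ℝ) (hφ : ConvexOn ℝ Set.univ φ)
    (x xplus : EuclideanSpace ℝ (Fin n))
    (hmem : xplus ∈ C)
    (hmin : IsMinOn (fun u => φ u + D u x) C xplus) :
    ∀ u ∈ C, φ xplus + D xplus x ≤ φ u + D u x - D u xplus := by
  obtain rfl : D = bregmanDiv h := funext₂ hD
  intro u hu
  have hopt := hmin.le_add_fderiv_of_convexOn (hφ.subset (subset_univ C) hC)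
    (hasGradientAt_bregmanDiv_left (hdiff xplus) x).hasFDerivAt hmem hu
  rw [toDual_apply_apply] at hopt
  linarith [bregmanDiv_eq_add_add_inner h u x xplus]

/-- Three-point property of the Bregman divergence. -/
theorem bregman_three_point {n : ℕ}
    (h : EuclideanSpace ℝ (Fin n) → ℝ)
    (hconv : StrictConvexOn ℝ Set.univ h)
    (hdiff : Differentiable ℝ h)
    (D : EuclideanSpace ℝ (Fin n) → EuclideanSpace ℝ (Fin n) → ℝ)
    (hD : ∀ p q, D p q = h p - h q - (inner ℝ (gradient h q) (p - q) : ℝ))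
    (C : Set (EuclideanSpace ℝ (Fin n))) (hC : Convex ℝ C) (hCclosed : IsClosed C)
    (φ : EuclideanSpace ℝ (Fin n) → ℝ) (hφ : ConvexOn ℝ Set.univ φ)
    (x xplus : EuclideanSpace ℝ (Fin n))
    (hmem : xplus ∈ C)
    (hmin : IsMinOn (fun u => φ u + D u x) C xplus) :
    ∀ u ∈ C, φ xplus + D xplus x ≤ φ u + D u x - D u xplus :=
  bregman_three_point_general h hdiff D hD C hC φ hφ x xplus hmem hmin
end

section
/- Linear rate from weighted recursion: Suppose C > 1, (U_k) and (D_k) are nonnegative sequences, (η_k) positive with η_{k+1}(C−1) ≥ η_k C for all k, and C(U_{k+1} − U_k) + U_k ≤ D_k/η_k − D_{k+1}/η_k for all k. Then U_k + D_k/(η_k(C−1)) ≤ (1 − 1/C)^k (U_0 + D_0/(η_0(C−1))) for all k ≥ 0. -/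
theorem linear_rate_from_weighted_recursion (C : ℝ) (hC : 1 < C)
    (U D η : ℕ → ℝ)
    (hU : ∀ k, 0 ≤ U k) (hD : ∀ k, 0 ≤ D k) (hη : ∀ k, 0 < η k)
    (hstep : ∀ k, η (k + 1) * (C - 1) ≥ η k * C)
    (hrec : ∀ k, C * (U (k + 1) - U k) + U k ≤ D k / η k - D (k + 1) / η k) :
    ∀ k, U k + D k / (η k * (C - 1)) ≤
      (1 - 1 / C) ^ k * (U 0 + D 0 / (η 0 * (C - 1))) := by
  have hC0 : (0:ℝ) < C := by linarith
  have hC1 : (0:ℝ) < C - 1 := by linarith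
  have hq : (0:ℝ) ≤ 1 - 1 / C := by
    have : 1 / C < 1 := by
      rw [div_lt_one hC0]; linarith
    linarith
  have key : ∀ k, U (k+1) + D (k+1) / (η (k+1) * (C-1)) ≤
      (1 - 1/C) * (U k + D k / (η k * (C-1))) := by
    intro k
    have hηk := hη k
    have hηk1 := hη (k+1)
    have h1 : D (k+1) / (η (k+1) * (C-1)) ≤ D (k+1) / (η k * C) :=
      div_le_div_of_nonneg_left (hD _) (by positivity) (hstep k)
    have hrec' := hrec k
    have h2 : U (k+1) + D (k+1) / (η k * C) ≤
        (1 - 1/C) * (U k + D k / (η k * (C-1))) := by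
      have e : (1 - 1/C) * (U k + D k / (η k * (C-1))) =
          (1 - 1/C) * U k + D k / (η k * C) := by
        field_simp
      rw [e]
      have hx : C * (D k / (η k * C)) = D k / η k := by
        field_simp
      have hy : C * (D (k+1) / (η k * C)) = D (k+1) / η k := by
        field_simp
      have hu : C * ((1 - 1/C) * U k) = (C - 1) * U k := by
        field_simp
      have h3 : C * (U (k+1) + D (k+1) / (η k * C)) ≤
          C * ((1 - 1/C) * U k + D k / (η k * C)) := by
        rw [mul_add, mul_add, hx, hy, hu]
        linarith
      exact le_of_mul_le_mul_left h3 hC0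
    linarith
  intro k
  induction k with
  | zero => simp
  | succ n ih =>
    calc U (n+1) + D (n+1) / (η (n+1) * (C-1))
        ≤ (1 - 1/C) * (U n + D n / (η n * (C-1))) := key n
      _ ≤ (1 - 1/C) * ((1 - 1/C) ^ n * (U 0 + D 0 / (η 0 * (C-1)))) :=
          mul_le_mul_of_nonneg_left ih hq
      _ = (1 - 1/C) ^ (n+1) * (U 0 + D 0 / (η 0 * (C-1))) := by ring
end
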